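/- Let G and H be finite abelian groups with |G| = 2^n (n even, n ≥ 4) and |H| = 4, and let F : G → H be perfect nonlinear. Then the value distribution of F is one of exactly two possibilities: three fibers of size 2^{n−2} + 2^{n/2−2} and one fiber of size 2^{n−2} − 3·2^{n/2−2}, or three fibers of size 2^{n−2} − 2^{n/2−2} and one fiber of size 2^{n−2} + 3·2^{n/2−2}. -/

import Mathlib

/-!
Let `N b` be the size of the fibre of `F` over `b` and `D b = N b - 2^(n-2)` its deviation from
the mean. Counting pairs `(x, y)` with `F x = F y` by their difference `y - x`, perfect
nonlinearity gives `∑ N b ^ 2 = 2^n + (2^n - 1) 2^(n-2)`, hence `∑ D b = 0` and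
`∑ D b ^ 2 = 3 · 2^(n-2)`. Four integers with these moments are determined by a 2-adic descent:
if the sum of their squares is divisible by `8` they are all even, so one can halve down to
`∑ D b ^ 2 = 12`, whose solutions with `∑ D b = 0` are `±(-3, 1, 1, 1)` up to order.
-/

open Finset

lemma Int.sq_emod_eight_of_odd {x : ℤ} (hx : Odd x) : x ^ 2 % 8 = 1 := by
  obtain ⟨k, rfl⟩ := hx
  obtain ⟨j, hj⟩ := Int.even_mul_succ_self k
  have : (2 * k + 1) ^ 2 = 8 * j + 1 := by linear_combination 4 * hj
  omega

lemma Int.sq_emod_four_of_even {x : ℤ} (hx : Even x) : x ^ 2 % 4 = 0 := by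
  obtain ⟨k, rfl⟩ := hx
  have : (k + k) ^ 2 = 4 * k ^ 2 := by ring
  omega

lemma even_of_eight_dvd_sum_four_sq {a b c d : ℤ} (h : 8 ∣ a ^ 2 + b ^ 2 + c ^ 2 + d ^ 2) :
    Even a ∧ Even b ∧ Even c ∧ Even d := by
  have sq_mod (x : ℤ) : (Even x ∧ x ^ 2 % 4 = 0) ∨ x ^ 2 % 8 = 1 :=
    (Int.even_or_odd x).imp (fun hx => ⟨hx, Int.sq_emod_four_of_even hx⟩) Int.sq_emod_eight_of_odd
  rcases sq_mod a with ⟨ha, ha'⟩ | ha' <;> rcases sq_mod b with ⟨hb, hb'⟩ | hb' <;>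
    rcases sq_mod c with ⟨hc, hc'⟩ | hc' <;> rcases sq_mod d with ⟨hd, hd'⟩ | hd' <;>
    first | exact ⟨ha, hb, hc, hd⟩ | omega

def IsSpike {ι : Type*} (D : ι → ℤ) (s : ℤ) : Prop :=
  ∃ α, D α = -3 * s ∧ ∀ β, β ≠ α → D β = s

lemma exists_isSpike_of_sum_sq_eq_twelve (D : Fin 4 → ℤ) (h0 : ∑ i, D i = 0)
    (h2 : ∑ i, D i ^ 2 = 12) : ∃ ε : ℤ, (ε = 1 ∨ ε = -1) ∧ IsSpike D ε := by
  rw [Fin.sum_univ_four] at h0 h2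
  have hD : D = ![D 0, D 1, D 2, -(D 0 + D 1 + D 2)] := by
    ext i; fin_cases i <;> simp; linarith
  rw [hD] at h2 ⊢
  have mem_Icc_of_sq_le (x : ℤ) (hx : x ^ 2 ≤ 12) : x ∈ Icc (-3) 3 :=
    mem_Icc.2 ⟨by nlinarith, by nlinarith⟩
  have search : ∀ a ∈ Icc (-3 : ℤ) 3, ∀ b ∈ Icc (-3 : ℤ) 3, ∀ c ∈ Icc (-3 : ℤ) 3,
      a ^ 2 + b ^ 2 + c ^ 2 + (-(a + b + c)) ^ 2 = 12 →
      ∃ ε ∈ ({1, -1} : Finset ℤ), ∃ α : Fin 4, ![a, b, c, -(a + b + c)] α = -3 * ε ∧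
        ∀ β, β ≠ α → ![a, b, c, -(a + b + c)] β = ε := by
    decide
  simp only [Matrix.cons_val] at h2
  obtain ⟨ε, hε, hspike⟩ := search _ (mem_Icc_of_sq_le _ (by nlinarith))
    _ (mem_Icc_of_sq_le _ (by nlinarith)) _ (mem_Icc_of_sq_le _ (by nlinarith)) h2
  exact ⟨ε, by simpa using hε, hspike⟩

lemma exists_isSpike_fin_four (k : ℕ) (D : Fin 4 → ℤ) (h0 : ∑ i, D i = 0)
    (h2 : ∑ i, D i ^ 2 = 3 * 4 ^ (k + 1)) :
    ∃ ε : ℤ, (ε = 1 ∨ ε = -1) ∧ IsSpike D (ε * 2 ^ k) := by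
  induction k generalizing D with
  | zero => simpa using exists_isSpike_of_sum_sq_eq_twelve D h0 (by simpa using h2)
  | succ k ih =>
    have hD : ∀ i, Even (D i) := by
      have h8 : 8 ∣ ∑ i, D i ^ 2 := h2 ▸ ⟨6 * 4 ^ k, by ring⟩
      rw [Fin.sum_univ_four] at h8
      obtain ⟨h0, h1, h2, h3⟩ := even_of_eight_dvd_sum_four_sq h8
      intro i; fin_cases i <;> assumption
    choose D' hD' using hD
    simp only [hD', sum_add_distrib] at h0
    simp only [hD', ← two_mul, mul_pow, ← mul_sum] at h2
    obtain ⟨ε, hε, α, hα, hβ⟩ := ih D' (by linarith) (by rw [pow_succ _ (k + 1)] at h2; linarith)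
    refine ⟨ε, hε, α, by rw [hD', hα]; ring, fun β hne => by rw [hD', hβ β hne]; ring⟩

lemma exists_isSpike_of_card_eq_four {ι : Type*} [Fintype ι] (hι : Fintype.card ι = 4)
    (k : ℕ) (D : ι → ℤ) (h0 : ∑ i, D i = 0) (h2 : ∑ i, D i ^ 2 = 3 * 4 ^ (k + 1)) :
    ∃ ε : ℤ, (ε = 1 ∨ ε = -1) ∧ IsSpike D (ε * 2 ^ k) := by
  let e := Fintype.equivFinOfCardEq hι
  obtain ⟨ε, hε, α, hα, hβ⟩ := exists_isSpike_fin_four k (fun i => D (e.symm i))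
    (by rwa [e.symm.sum_comp D]) (by rwa [e.symm.sum_comp (D · ^ 2)])
  refine ⟨ε, hε, e.symm α, hα, fun β hne => ?_⟩
  simpa using hβ (e β) (by rwa [ne_eq, ← e.eq_symm_apply])

section Fibres

variable {G H : Type*} [Fintype G] [Fintype H] [DecidableEq H] (F : G → H)

lemma sum_card_fiber : ∑ b, #{x | F x = b} = Fintype.card G := by
  rw [← card_univ]
  exact (card_eq_sum_card_fiberwise fun x _ => mem_univ (F x)).symm

lemma sum_card_fiber_sub_eq_zero {c : ℕ} (hc : Fintype.card G = c * Fintype.card H) :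
    ∑ b, ((#{x | F x = b} : ℤ) - c) = 0 := by
  rw [sum_sub_distrib, ← Nat.cast_sum, sum_card_fiber, hc, sum_const, card_univ]
  push_cast
  ring

lemma sum_sq_card_fiber_eq_sum_card_shift [AddCommGroup G] :
    ∑ b, #{x | F x = b} ^ 2 = ∑ a, #{x | F (x + a) = F x} := by
  calc ∑ b, #{x | F x = b} ^ 2 = ∑ x, ∑ y, if F y = F x then 1 else 0 := by
        simp only [sq, card_filter, sum_mul_sum]
        rw [sum_comm]
        refine sum_congr rfl fun x _ => ?_
        rw [sum_comm]
        simp [sum_ite_eq', eq_comm]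
    _ = ∑ x, ∑ a, if F (x + a) = F x then 1 else 0 :=
        sum_congr rfl fun x _ => (Equiv.sum_comp (Equiv.addLeft x) _).symm
    _ = ∑ a, #{x | F (x + a) = F x} := by
        rw [sum_comm]; simp only [card_filter]

end Fibres

section PerfectNonlinear

variable {G H : Type*} [AddCommGroup G] [Fintype G] [AddCommGroup H] [Fintype H] [DecidableEq H]

def IsPerfectNonlinear (F : G → H) : Prop :=
  ∀ a : G, a ≠ 0 → ∀ b : H, #{x | F (x + a) - F x = b} * Fintype.card H = Fintype.card G

variable {F : G → H} {c : ℕ}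

lemma IsPerfectNonlinear.card_shift_eq (hF : IsPerfectNonlinear F)
    (hc : Fintype.card G = c * Fintype.card H) {a : G} (ha : a ≠ 0) :
    #{x | F (x + a) = F x} = c := by
  refine Nat.eq_of_mul_eq_mul_right (Fintype.card_pos (α := H)) ?_
  simpa only [sub_eq_zero, ← hc] using hF a ha 0

lemma IsPerfectNonlinear.sum_sq_card_fiber (hF : IsPerfectNonlinear F)
    (hc : Fintype.card G = c * Fintype.card H) :
    ∑ b, #{x | F x = b} ^ 2 = Fintype.card G + (Fintype.card G - 1) * c := by
  classical
  rw [sum_sq_card_fiber_eq_sum_card_shift, Fintype.sum_eq_add_sum_compl 0,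
    sum_congr rfl fun a ha => hF.card_shift_eq hc (by simpa using ha)]
  simp [card_compl]

lemma IsPerfectNonlinear.sum_sq_card_fiber_sub (hF : IsPerfectNonlinear F)
    (hc : Fintype.card G = c * Fintype.card H) :
    ∑ b, ((#{x | F x = b} : ℤ) - c) ^ 2 = Fintype.card G - c := by
  have hsq := congrArg (Nat.cast : ℕ → ℤ) (hF.sum_sq_card_fiber hc)
  have hsum := congrArg (Nat.cast : ℕ → ℤ) (sum_card_fiber F)
  have hc' := congrArg (Nat.cast : ℕ → ℤ) hc
  push_cast [Nat.one_le_iff_ne_zero.2 Fintype.card_ne_zero] at hsq hsum hc'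
  simp only [sub_sq, sum_add_distrib, sum_sub_distrib, ← sum_mul, ← mul_sum, sum_const, card_univ,
    nsmul_eq_mul]
  rw [hsq, hsum]
  linear_combination -(c : ℤ) * hc'

end PerfectNonlinear

/-- A perfect nonlinear function from a group of order `2^n` to a group of order 4
has one of exactly the two extremal value distributions. -/
theorem value_distribution_card_four
    {G H : Type*} [AddCommGroup G] [Fintype G]
    [AddCommGroup H] [Fintype H] [DecidableEq H] (F : G → H)
    (n : ℕ) (hn : Even n) (hn4 : 4 ≤ n)
    (hG : Fintype.card G = 2 ^ n) (hH : Fintype.card H = 4)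
    (hPN : ∀ a : G, a ≠ 0 → ∀ b : H,
      (Finset.univ.filter fun x => F (x + a) - F x = b).card * Fintype.card H
        = Fintype.card G) :
    ∃ ε : ℤ, (ε = 1 ∨ ε = -1) ∧ ∃ α : H,
      ((Finset.univ.filter fun x => F x = α).card : ℤ)
          = 2 ^ (n - 2) - 3 * ε * 2 ^ (n / 2 - 2) ∧
      ∀ β : H, β ≠ α →
        ((Finset.univ.filter fun x => F x = β).card : ℤ)
          = 2 ^ (n - 2) + ε * 2 ^ (n / 2 - 2) := by
  obtain ⟨k, rfl⟩ : ∃ k, n = 2 * k + 4 := by obtain ⟨r, hr⟩ := hn; exact ⟨r - 2, by omega⟩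
  have hc : Fintype.card G = 4 ^ (k + 1) * Fintype.card H := by
    rw [hG, hH, show 2 * k + 4 = 2 * (k + 2) by ring, pow_mul, pow_succ]; norm_num
  obtain ⟨ε, hε, α, hα, hβ⟩ := exists_isSpike_of_card_eq_four hH k
    (fun b => (#{x | F x = b} : ℤ) - (4 ^ (k + 1) : ℕ)) (sum_card_fiber_sub_eq_zero F hc)
    (by rw [IsPerfectNonlinear.sum_sq_card_fiber_sub hPN hc, hc, hH]; push_cast; ring)
  push_cast at hα hβ
  have hpow : (2 : ℤ) ^ (2 * k + 4 - 2) = 4 ^ (k + 1) := by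
    rw [show 2 * k + 4 - 2 = 2 * (k + 1) by omega, pow_mul]; norm_num
  rw [hpow, show (2 * k + 4) / 2 - 2 = k by omega]
  exact ⟨ε, hε, α, by linear_combination hα, fun β hne => by linear_combination hβ β hne⟩
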